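/- There exists a constant c > 0 such that |Ai(x)| ≤ c·e^{−(2/3)x^{3/2}} for all x > 0, and Ai is bounded on (−∞, 0]. -/

import Mathlib

open Filter Real Set Topology

namespace AiryAux

variable {Ai : ℝ → ℝ}

lemma hdA (hd : Differentiable ℝ Ai) (x : ℝ) : HasDerivAt Ai (deriv Ai x) x :=
  (hd x).hasDerivAt

lemma hdA' (hd' : Differentiable ℝ (deriv Ai))
    (hode : ∀ x, deriv (deriv Ai) x = x * Ai x) (x : ℝ) :
    HasDerivAt (deriv Ai) (x * Ai x) x := by
  simpa [hode x] using (hd' x).hasDerivAt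

lemma eventually_abs_lt_one (hlim : Tendsto Ai atTop (𝓝 0)) :
    ∀ᶠ x in atTop, |Ai x| < 1 := by
  have := Metric.tendsto_nhds.mp hlim 1 one_pos
  simpa [Real.dist_eq] using this

/-- if `Ai x ≥ b + c (x - a)` with `c > 0` then `Ai` cannot tend to `0`. -/
lemma linear_contra (hlim : Tendsto Ai atTop (𝓝 0)) {a b c : ℝ} (hc : 0 < c)
    (hbound : ∀ x ≥ a, b + c * (x - a) ≤ Ai x) : False := by
  obtain ⟨x, hx1, hx2⟩ :=
    ((eventually_abs_lt_one hlim).and (eventually_ge_atTop (max a (a + (1 - b) / c)))).exists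
  have hxa : x ≥ a := le_trans (le_max_left _ _) hx2
  have h1 : c * (x - a) ≥ 1 - b := by
    have h2 : x - a ≥ (1 - b) / c := by
      have := le_trans (le_max_right _ _) hx2; linarith
    calc c * (x - a) ≥ c * ((1 - b)/c) := by nlinarith
    _ = 1 - b := by field_simp
  have := hbound x hxa
  have := (abs_lt.mp hx1).2
  linarith

lemma linear_contra_sq (hlim : Tendsto Ai atTop (𝓝 0)) {a b c : ℝ} (hc : 0 < c)
    (hbound : ∀ x ≥ a, b + c * (x - a) ≤ Ai x ^ 2) : False := by
  obtain ⟨x, hx1, hx2⟩ :=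
    ((eventually_abs_lt_one hlim).and (eventually_ge_atTop (max a (a + (1 - b) / c)))).exists
  have hxa : x ≥ a := le_trans (le_max_left _ _) hx2
  have h1 : c * (x - a) ≥ 1 - b := by
    have h2 : x - a ≥ (1 - b) / c := by
      have := le_trans (le_max_right _ _) hx2; linarith
    calc c * (x - a) ≥ c * ((1 - b)/c) := by nlinarith
    _ = 1 - b := by field_simp
  have h3 := hbound x hxa
  have h4 := abs_lt.mp hx1
  nlinarith

lemma G_mono (hd : Differentiable ℝ Ai) (hd' : Differentiable ℝ (deriv Ai))
    (hode : ∀ x, deriv (deriv Ai) x = x * Ai x) :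
    MonotoneOn (fun x => Ai x * deriv Ai x) (Ici (0:ℝ)) := by
  apply monotoneOn_of_deriv_nonneg (convex_Ici 0)
    (hd.continuous.mul hd'.continuous).continuousOn (hd.mul hd').differentiableOn
  intro x hx
  rw [interior_Ici] at hx
  rw [((hdA hd x).mul (hdA' hd' hode x)).deriv]
  nlinarith [sq_nonneg (deriv Ai x), sq_nonneg (Ai x), le_of_lt (mem_Ioi.mp hx),
    mul_nonneg (le_of_lt (mem_Ioi.mp hx)) (sq_nonneg (Ai x))]

lemma G_nonpos (hd : Differentiable ℝ Ai) (hd' : Differentiable ℝ (deriv Ai))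
    (hode : ∀ x, deriv (deriv Ai) x = x * Ai x) (hlim : Tendsto Ai atTop (𝓝 0)) :
    ∀ x ≥ (0:ℝ), Ai x * deriv Ai x ≤ 0 := by
  intro a ha
  by_contra h
  push_neg at h
  -- φ x = Ai x * Ai x - 2 G a * x is monotone on [a, ∞)
  have hmono : MonotoneOn (fun x => Ai x * Ai x - 2 * (Ai a * deriv Ai a) * x) (Ici a) := by
    apply monotoneOn_of_deriv_nonneg (convex_Ici a)
      ((hd.continuous.mul hd.continuous).sub (continuous_const.mul continuous_id)).continuousOn
      (((hd.mul hd).sub ((differentiable_id.const_mul _))).differentiableOn)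
    intro x hx
    rw [interior_Ici] at hx
    have hDx : HasDerivAt (fun x => Ai x * Ai x - 2 * (Ai a * deriv Ai a) * x)
        (deriv Ai x * Ai x + Ai x * deriv Ai x - 2 * (Ai a * deriv Ai a) * 1) x :=
      ((hdA hd x).mul (hdA hd x)).sub ((hasDerivAt_id x).const_mul (2 * (Ai a * deriv Ai a)))
    try simp only [id_eq]
    erw [hDx.deriv]
    have := G_mono hd hd' hode ha (le_trans ha (le_of_lt hx)) (le_of_lt hx)
    simp only at this ⊢
    linarith
  refine linear_contra_sq (a := a) (b := Ai a ^ 2) (c := 2 * (Ai a * deriv Ai a)) hlim (by linarith) ?_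
  intro x hx
  have h5 := hmono (self_mem_Ici) hx hx
  simp only at h5
  nlinarith [sq_nonneg (Ai x)]

lemma R_anti (hd : Differentiable ℝ Ai) (hd' : Differentiable ℝ (deriv Ai))
    (hode : ∀ x, deriv (deriv Ai) x = x * Ai x) (hlim : Tendsto Ai atTop (𝓝 0)) :
    AntitoneOn (fun x => Ai x * Ai x + deriv Ai x * deriv Ai x) (Ici (0:ℝ)) := by
  apply antitoneOn_of_deriv_nonpos (convex_Ici 0)
    ((hd.continuous.mul hd.continuous).add (hd'.continuous.mul hd'.continuous)).continuousOn
    ((hd.mul hd).add (hd'.mul hd')).differentiableOn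
  intro x hx
  rw [interior_Ici] at hx
  have hDx : HasDerivAt (fun x => Ai x * Ai x + deriv Ai x * deriv Ai x)
      ((deriv Ai x * Ai x + Ai x * deriv Ai x) +
        (x * Ai x * deriv Ai x + deriv Ai x * (x * Ai x))) x :=
    ((hdA hd x).mul (hdA hd x)).add ((hdA' hd' hode x).mul (hdA' hd' hode x))
  erw [hDx.deriv]
  have h1 : (deriv Ai x * Ai x + Ai x * deriv Ai x) +
      (x * Ai x * deriv Ai x + deriv Ai x * (x * Ai x)) =
      (2 + 2 * x) * (Ai x * deriv Ai x) := by ring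
  rw [h1]
  exact mul_nonpos_of_nonneg_of_nonpos (by linarith [mem_Ioi.mp hx])
    (G_nonpos hd hd' hode hlim x (le_of_lt (mem_Ioi.mp hx)))

lemma A_nonneg (hd : Differentiable ℝ Ai) (hd' : Differentiable ℝ (deriv Ai))
    (hode : ∀ x, deriv (deriv Ai) x = x * Ai x) (hlim : Tendsto Ai atTop (𝓝 0))
    (hA0 : 0 < Ai 0) : ∀ x ≥ (0:ℝ), 0 ≤ Ai x := by
  intro x0 hx0
  by_contra h
  push_neg at h
  obtain ⟨z, hz_mem, hz⟩ : ∃ z ∈ Icc (0:ℝ) x0, Ai z = 0 := by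
    have hsub := intermediate_value_Icc' hx0 hd.continuous.continuousOn
    have h0 : (0:ℝ) ∈ Icc (Ai x0) (Ai 0) := ⟨h.le, hA0.le⟩
    obtain ⟨z, hz, hz'⟩ := hsub h0
    exact ⟨z, hz, hz'⟩
  by_cases hz' : deriv Ai z = 0
  · -- then Ai x0 = 0 by R antitone, contradiction
    have h1 := R_anti hd hd' hode hlim (mem_Ici.mpr hz_mem.1)
      (mem_Ici.mpr (le_trans hz_mem.1 hz_mem.2)) hz_mem.2
    simp only [hz, hz'] at h1
    nlinarith [sq_nonneg (Ai x0), sq_nonneg (deriv Ai x0)]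
  · -- slope of G at z is positive
    set d := deriv Ai z with hdz
    have hGz : HasDerivAt (fun x => Ai x * deriv Ai x) (d * d) z := by
      have := (hdA hd z).fun_mul (hdA' hd' hode z)
      simpa [hz] using this
    have hslope : Tendsto (slope (fun x => Ai x * deriv Ai x) z) (𝓝[>] z) (𝓝 (d*d)) :=
      (hasDerivAt_iff_tendsto_slope.mp hGz).mono_left
        (nhdsWithin_mono z (fun x hx => ne_of_gt hx))
    have hpos : ∀ᶠ x in 𝓝[>] z, 0 < slope (fun x => Ai x * deriv Ai x) z x :=
      hslope.eventually (eventually_gt_nhds (mul_self_pos.mpr hz'))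
    obtain ⟨x, hx1, hx2⟩ := (hpos.and self_mem_nhdsWithin).exists
    have hxz : z < x := hx2
    have : 0 < Ai x * deriv Ai x := by
      have := hx1
      rw [slope_def_field] at this
      have h3 : Ai x * deriv Ai x - Ai z * deriv Ai z > 0 := by
        have := mul_pos this (sub_pos.mpr hxz)
        rw [div_mul_cancel₀] at this
        · simpa [hz] using this
        · exact ne_of_gt (sub_pos.mpr hxz)
      simpa [hz] using h3
    exact absurd (G_nonpos hd hd' hode hlim x (le_trans hz_mem.1 hxz.le)) (by linarith)

lemma A'_mono (hd : Differentiable ℝ Ai) (hd' : Differentiable ℝ (deriv Ai))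
    (hode : ∀ x, deriv (deriv Ai) x = x * Ai x) (hlim : Tendsto Ai atTop (𝓝 0))
    (hA0 : 0 < Ai 0) : MonotoneOn (deriv Ai) (Ici (0:ℝ)) := by
  apply monotoneOn_of_deriv_nonneg (convex_Ici 0) hd'.continuous.continuousOn
    hd'.differentiableOn
  intro x hx
  rw [interior_Ici] at hx
  rw [hode x]
  exact mul_nonneg (le_of_lt hx) (A_nonneg hd hd' hode hlim hA0 x (le_of_lt hx))

lemma A'_nonpos (hd : Differentiable ℝ Ai) (hd' : Differentiable ℝ (deriv Ai))
    (hode : ∀ x, deriv (deriv Ai) x = x * Ai x) (hlim : Tendsto Ai atTop (𝓝 0))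
    (hA0 : 0 < Ai 0) : ∀ x ≥ (0:ℝ), deriv Ai x ≤ 0 := by
  intro a ha
  by_contra h
  push_neg at h
  have hmono : MonotoneOn (fun x => Ai x - deriv Ai a * x) (Ici a) := by
    apply monotoneOn_of_deriv_nonneg (convex_Ici a)
      (hd.continuous.sub (continuous_const.mul continuous_id)).continuousOn
      (hd.sub (differentiable_id.const_mul _)).differentiableOn
    intro x hx
    rw [interior_Ici] at hx
    have hDx : HasDerivAt (fun x => Ai x - deriv Ai a * x)
        (deriv Ai x - deriv Ai a * 1) x :=
      (hdA hd x).sub ((hasDerivAt_id x).const_mul (deriv Ai a))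
    try simp only [id_eq]
    erw [hDx.deriv]
    have := A'_mono hd hd' hode hlim hA0 ha (le_trans ha (le_of_lt hx)) (le_of_lt hx)
    linarith
  refine linear_contra (a := a) (b := Ai a) (c := deriv Ai a) hlim h ?_
  intro x hx
  have h5 := hmono (self_mem_Ici) hx hx
  simp only at h5
  linarith

lemma A'_tendsto (hd : Differentiable ℝ Ai) (hd' : Differentiable ℝ (deriv Ai))
    (hode : ∀ x, deriv (deriv Ai) x = x * Ai x) (hlim : Tendsto Ai atTop (𝓝 0))
    (hA0 : 0 < Ai 0) : Tendsto (deriv Ai) atTop (𝓝 0) := by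
  set g : ℝ → ℝ := fun x => deriv Ai (max x 0) with hg
  have hmg : Monotone g := fun x y hxy =>
    A'_mono hd hd' hode hlim hA0 (mem_Ici.mpr (le_max_right x 0))
      (mem_Ici.mpr (le_max_right y 0)) (max_le_max hxy le_rfl)
  have hbdd : BddAbove (Set.range g) := by
    refine ⟨0, ?_⟩
    rintro y ⟨x, rfl⟩
    exact A'_nonpos hd hd' hode hlim hA0 _ (le_max_right x 0)
  have hgt : Tendsto g atTop (𝓝 (⨆ x, g x)) := tendsto_atTop_ciSup hmg hbdd
  have heq : deriv Ai =ᶠ[atTop] g := by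
    filter_upwards [eventually_ge_atTop (0:ℝ)] with x hx
    simp [hg, max_eq_left hx]
  have hL : Tendsto (deriv Ai) atTop (𝓝 (⨆ x, g x)) := hgt.congr' heq.symm
  have hLle : (⨆ x, g x) ≤ 0 := by
    apply ciSup_le
    intro x
    exact A'_nonpos hd hd' hode hlim hA0 _ (le_max_right x 0)
  rcases eq_or_lt_of_le hLle with hL0 | hL0
  · rwa [hL0] at hL
  · exfalso
    set L := ⨆ x, g x with hLdef
    have hub : ∀ x ≥ (0:ℝ), deriv Ai x ≤ L := by
      intro x hx
      have := le_ciSup hbdd x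
      simpa [hg, max_eq_left hx] using this
    -- Ai x ≤ Ai 0 + L * x for all x ≥ 0, so -Ai x ≥ -Ai 0 + (-L) x
    have hmono : MonotoneOn (fun x => L * x - Ai x) (Ici (0:ℝ)) := by
      apply monotoneOn_of_deriv_nonneg (convex_Ici 0)
        ((continuous_const.mul continuous_id).sub hd.continuous).continuousOn
        ((differentiable_id.const_mul _).sub hd).differentiableOn
      intro x hx
      rw [interior_Ici] at hx
      have hDx : HasDerivAt (fun x => L * x - Ai x) (L * 1 - deriv Ai x) x :=
        ((hasDerivAt_id x).const_mul L).sub (hdA hd x)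
      try simp only [id_eq]
      erw [hDx.deriv]
      have := hub x (le_of_lt hx)
      linarith
    refine linear_contra (Ai := fun x => -Ai x) (a := 0) (b := -Ai 0) (c := -L)
      (by simpa using hlim.neg) (by linarith) ?_
    intro x hx
    have h5 := hmono self_mem_Ici (mem_Ici.mpr hx) hx
    simp only at h5 ⊢
    linarith

lemma W_hasDeriv (hd : Differentiable ℝ Ai) (hd' : Differentiable ℝ (deriv Ai))
    (hode : ∀ x, deriv (deriv Ai) x = x * Ai x) {x : ℝ} (hx : 0 < x) :
    HasDerivAt (fun y => (deriv Ai y + Real.sqrt y * Ai y) *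
        Real.exp (-(2/3) * (y * Real.sqrt y)))
      (Ai x * Real.exp (-(2/3) * (x * Real.sqrt x)) / (2 * Real.sqrt x)) x := by
  have hs : 0 < Real.sqrt x := Real.sqrt_pos.mpr hx
  have h1 : HasDerivAt (fun y => y * Real.sqrt y)
      (1 * Real.sqrt x + x * (1/(2*Real.sqrt x))) x :=
    (hasDerivAt_id x).mul (Real.hasDerivAt_sqrt hx.ne')
  have h3 : HasDerivAt (fun y => Real.exp (-(2/3) * (y * Real.sqrt y)))
      (Real.exp (-(2/3) * (x * Real.sqrt x)) *
        (-(2/3) * (1 * Real.sqrt x + x * (1/(2*Real.sqrt x))))) x :=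
    (h1.const_mul (-(2/3))).exp
  have h4 : HasDerivAt (fun y => deriv Ai y + Real.sqrt y * Ai y)
      (x * Ai x + ((1/(2*Real.sqrt x)) * Ai x + Real.sqrt x * deriv Ai x)) x :=
    (hdA' hd' hode x).add ((Real.hasDerivAt_sqrt hx.ne').mul (hdA hd x))
  have h5 := h4.fun_mul h3
  refine h5.congr_deriv ?_; symm
  set s := Real.sqrt x with hsdef
  have hss : s * s = x := Real.mul_self_sqrt hx.le
  rw [← hss]
  field_simp
  ring

lemma W_mono (hd : Differentiable ℝ Ai) (hd' : Differentiable ℝ (deriv Ai))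
    (hode : ∀ x, deriv (deriv Ai) x = x * Ai x) (hlim : Tendsto Ai atTop (𝓝 0))
    (hA0 : 0 < Ai 0) :
    MonotoneOn (fun x => (deriv Ai x + Real.sqrt x * Ai x) *
      Real.exp (-(2/3) * (x * Real.sqrt x))) (Ici (0:ℝ)) := by
  apply monotoneOn_of_deriv_nonneg (convex_Ici 0)
  · exact ((hd'.continuous.add (Real.continuous_sqrt.mul hd.continuous)).mul
      (Real.continuous_exp.comp (continuous_const.mul
        (continuous_id.mul Real.continuous_sqrt)))).continuousOn
  · intro x hx
    rw [interior_Ici] at hx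
    exact (W_hasDeriv hd hd' hode hx).differentiableAt.differentiableWithinAt
  · intro x hx
    rw [interior_Ici] at hx
    rw [(W_hasDeriv hd hd' hode hx).deriv]
    have h1 := A_nonneg hd hd' hode hlim hA0 x hx.le
    positivity

lemma sqrt_mul_exp_le_one {x : ℝ} (hx : 0 ≤ x) :
    Real.sqrt x * Real.exp (-(2/3) * (x * Real.sqrt x)) ≤ 1 := by
  set t := Real.sqrt x with htdef
  have ht : 0 ≤ t := Real.sqrt_nonneg x
  have hss : t * t = x := Real.mul_self_sqrt hx
  have hx3 : (2/3 : ℝ) * (x * t) = 2/3 * (t*t*t) := by rw [← hss]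
  have h2 : (2/3 : ℝ)*(x*t) + 1 ≤ Real.exp ((2/3)*(x*t)) := Real.add_one_le_exp _
  have h1 : t ≤ Real.exp ((2/3) * (x * t)) := by
    rw [hx3] at h2 ⊢
    nlinarith [mul_nonneg ht (sq_nonneg (t-1)), sq_nonneg (8*t-5)]
  calc t * Real.exp (-(2/3) * (x * t))
      ≤ Real.exp ((2/3)*(x*t)) * Real.exp (-(2/3) * (x * t)) :=
        mul_le_mul_of_nonneg_right h1 (Real.exp_nonneg _)
    _ = 1 := by rw [← Real.exp_add]; ring_nf; exact Real.exp_zero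

lemma W_tendsto (hlim : Tendsto Ai atTop (𝓝 0))
    (hA'0 : Tendsto (deriv Ai) atTop (𝓝 0)) :
    Tendsto (fun x => (deriv Ai x + Real.sqrt x * Ai x) *
      Real.exp (-(2/3) * (x * Real.sqrt x))) atTop (𝓝 0) := by
  apply squeeze_zero_norm' (a := fun x => |deriv Ai x| + |Ai x|)
  · filter_upwards [eventually_ge_atTop (0:ℝ)] with x hx
    have hs : 0 ≤ Real.sqrt x := Real.sqrt_nonneg x
    have hE0 : 0 ≤ Real.exp (-(2/3) * (x * Real.sqrt x)) := Real.exp_nonneg _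
    have hE1 : Real.exp (-(2/3) * (x * Real.sqrt x)) ≤ 1 := by
      rw [← Real.exp_zero]
      exact Real.exp_le_exp.mpr (by nlinarith)
    have hsE := sqrt_mul_exp_le_one hx
    rw [Real.norm_eq_abs]
    calc |(deriv Ai x + Real.sqrt x * Ai x) * Real.exp (-(2/3) * (x * Real.sqrt x))|
        = |deriv Ai x + Real.sqrt x * Ai x| * Real.exp (-(2/3) * (x * Real.sqrt x)) := by
          rw [abs_mul, abs_of_nonneg hE0]
      _ ≤ (|deriv Ai x| + Real.sqrt x * |Ai x|) * Real.exp (-(2/3) * (x * Real.sqrt x)) := by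
          apply mul_le_mul_of_nonneg_right _ hE0
          calc |deriv Ai x + Real.sqrt x * Ai x| ≤ |deriv Ai x| + |Real.sqrt x * Ai x| :=
                abs_add_le _ _
            _ = |deriv Ai x| + Real.sqrt x * |Ai x| := by rw [abs_mul, abs_of_nonneg hs]
      _ = |deriv Ai x| * Real.exp (-(2/3) * (x * Real.sqrt x)) +
            |Ai x| * (Real.sqrt x * Real.exp (-(2/3) * (x * Real.sqrt x))) := by ring
      _ ≤ |deriv Ai x| * 1 + |Ai x| * 1 := by
          gcongr
      _ = |deriv Ai x| + |Ai x| := by ring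
  · have := (hA'0.abs).add (hlim.abs)
    simpa using this

lemma W_nonpos (hd : Differentiable ℝ Ai) (hd' : Differentiable ℝ (deriv Ai))
    (hode : ∀ x, deriv (deriv Ai) x = x * Ai x) (hlim : Tendsto Ai atTop (𝓝 0))
    (hA0 : 0 < Ai 0) (hA'0 : Tendsto (deriv Ai) atTop (𝓝 0)) :
    ∀ x ≥ (0:ℝ), (deriv Ai x + Real.sqrt x * Ai x) *
      Real.exp (-(2/3) * (x * Real.sqrt x)) ≤ 0 := by
  intro x hx
  refine ge_of_tendsto (W_tendsto hlim hA'0) ?_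
  filter_upwards [eventually_ge_atTop x] with t ht
  exact W_mono hd hd' hode hlim hA0 (mem_Ici.mpr hx) (mem_Ici.mpr (le_trans hx ht)) ht

lemma V_anti (hd : Differentiable ℝ Ai) (hd' : Differentiable ℝ (deriv Ai))
    (hode : ∀ x, deriv (deriv Ai) x = x * Ai x) (hlim : Tendsto Ai atTop (𝓝 0))
    (hA0 : 0 < Ai 0) (hA'0 : Tendsto (deriv Ai) atTop (𝓝 0)) :
    AntitoneOn (fun x => Ai x * Real.exp ((2/3) * (x * Real.sqrt x))) (Ici (0:ℝ)) := by
  apply antitoneOn_of_deriv_nonpos (convex_Ici 0)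
  · exact (hd.continuous.mul (Real.continuous_exp.comp
      (continuous_const.mul (continuous_id.mul Real.continuous_sqrt)))).continuousOn
  · intro x hx
    rw [interior_Ici] at hx
    have h1 : HasDerivAt (fun y => y * Real.sqrt y)
        (1 * Real.sqrt x + x * (1/(2*Real.sqrt x))) x :=
      (hasDerivAt_id x).mul (Real.hasDerivAt_sqrt hx.ne')
    exact ((hdA hd x).mul ((h1.const_mul ((2:ℝ)/3)).exp)).differentiableAt.differentiableWithinAt
  · intro x hx
    rw [interior_Ici] at hx
    have hs : 0 < Real.sqrt x := Real.sqrt_pos.mpr hx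
    have h1 : HasDerivAt (fun y => y * Real.sqrt y)
        (1 * Real.sqrt x + x * (1/(2*Real.sqrt x))) x :=
      (hasDerivAt_id x).mul (Real.hasDerivAt_sqrt hx.ne')
    have hV := (hdA hd x).mul ((h1.const_mul ((2:ℝ)/3)).exp)
    erw [hV.deriv]
    have hkey : deriv Ai x * Real.exp ((2:ℝ)/3 * (x * Real.sqrt x)) +
        Ai x * (Real.exp ((2:ℝ)/3 * (x * Real.sqrt x)) *
          ((2:ℝ)/3 * (1 * Real.sqrt x + x * (1/(2*Real.sqrt x))))) =
        (deriv Ai x + Real.sqrt x * Ai x) * Real.exp ((2:ℝ)/3 * (x * Real.sqrt x)) := by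
      set s := Real.sqrt x with hsdef
      have hss : s * s = x := Real.mul_self_sqrt hx.le
      rw [← hss]
      field_simp
      ring
    rw [hkey]
    have hds : deriv Ai x + Real.sqrt x * Ai x ≤ 0 := by
      by_contra hcon
      push_neg at hcon
      exact absurd (W_nonpos hd hd' hode hlim hA0 hA'0 x hx.le)
        (not_le.mpr (mul_pos hcon (Real.exp_pos _)))
    exact mul_nonpos_of_nonpos_of_nonneg hds (Real.exp_nonneg _)

lemma F_mono (hd : Differentiable ℝ Ai) (hd' : Differentiable ℝ (deriv Ai))
    (hode : ∀ x, deriv (deriv Ai) x = x * Ai x) :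
    MonotoneOn (fun x => Ai x * Ai x - deriv Ai x * deriv Ai x / x) (Iic (-1:ℝ)) := by
  have hne : ∀ x : ℝ, x ∈ Iic (-1:ℝ) → x ≠ 0 := fun x hx => by
    intro h0; rw [h0] at hx; simp at hx; linarith
  have hder : ∀ x : ℝ, x < -1 → HasDerivAt
      (fun x => Ai x * Ai x - deriv Ai x * deriv Ai x / x)
      ((deriv Ai x * Ai x + Ai x * deriv Ai x) -
        ((x * Ai x * deriv Ai x + deriv Ai x * (x * Ai x)) * x -
          deriv Ai x * deriv Ai x * 1) / x ^ 2) x := by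
    intro x hx
    exact ((hdA hd x).mul (hdA hd x)).sub
      (((hdA' hd' hode x).mul (hdA' hd' hode x)).div (hasDerivAt_id x) (by linarith))
  apply monotoneOn_of_deriv_nonneg (convex_Iic _)
  · exact ContinuousOn.sub (hd.continuous.mul hd.continuous).continuousOn
      (((hd'.continuous.mul hd'.continuous).continuousOn).div continuousOn_id hne)
  · intro x hx
    rw [interior_Iic] at hx
    exact (hder x hx).differentiableAt.differentiableWithinAt
  · intro x hx
    rw [interior_Iic] at hx
    have hxlt : x < -1 := hx
    rw [(hder x hx).deriv]
    have hx0 : x ≠ 0 := by intro h0; rw [h0] at hxlt; linarith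
    have hkey : (deriv Ai x * Ai x + Ai x * deriv Ai x) -
        ((x * Ai x * deriv Ai x + deriv Ai x * (x * Ai x)) * x -
          deriv Ai x * deriv Ai x * 1) / x ^ 2 = (deriv Ai x / x) ^ 2 := by
      field_simp
      ring
    rw [hkey]
    positivity

end AiryAux

/-- `Ai` is the Airy function: the solution of `Ai″(x) = x·Ai(x)` decaying at `+∞`,
normalized by `Ai(0) = 3^{−2/3}/Γ(2/3)`. -/
def IsAiryFn (Ai : ℝ → ℝ) : Prop :=
  ContDiff ℝ (⊤ : ℕ∞) Ai ∧ (∀ x, deriv (deriv Ai) x = x * Ai x) ∧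
    Filter.Tendsto Ai Filter.atTop (nhds 0) ∧
    Ai 0 = (3 : ℝ) ^ (-(2 : ℝ) / 3) / Real.Gamma (2 / 3)

/-- There is `c > 0` with `|Ai(x)| ≤ c e^{−(2/3)x^{3/2}}` for all `x > 0`, and `Ai` is
bounded on `(−∞, 0]`. -/
theorem airy_decay_bounds (Ai : ℝ → ℝ) (hAi : IsAiryFn Ai) :
    (∃ c > (0 : ℝ), ∀ x > (0 : ℝ), |Ai x| ≤ c * Real.exp (-(2 / 3) * x ^ ((3 : ℝ) / 2))) ∧
      ∃ C : ℝ, ∀ x ≤ (0 : ℝ), |Ai x| ≤ C := by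
  obtain ⟨hsm, hode, hlim, hval⟩ := hAi
  have hd : Differentiable ℝ Ai := hsm.differentiable (by simp)
  have hd' : Differentiable ℝ (deriv Ai) :=
    (contDiff_infty_iff_deriv.mp (hsm.of_le (mod_cast le_top))).2.differentiable (by simp)
  have hA0 : 0 < Ai 0 := by
    rw [hval]
    exact div_pos (Real.rpow_pos_of_pos (by norm_num) _) (Real.Gamma_pos_of_pos (by norm_num))
  have hA'0 := AiryAux.A'_tendsto hd hd' hode hlim hA0
  constructor
  · refine ⟨Ai 0, hA0, ?_⟩
    intro x hx
    have hge := AiryAux.A_nonneg hd hd' hode hlim hA0 x hx.le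
    have hV := AiryAux.V_anti hd hd' hode hlim hA0 hA'0 self_mem_Ici (mem_Ici.mpr hx.le) hx.le
    simp only at hV
    rw [Real.sqrt_zero, mul_zero, mul_zero, Real.exp_zero, mul_one] at hV
    have h2 : Ai x * Real.exp ((2/3) * (x * Real.sqrt x)) * Real.exp (-(2/3) * (x * Real.sqrt x))
        ≤ Ai 0 * Real.exp (-(2/3) * (x * Real.sqrt x)) :=
      mul_le_mul_of_nonneg_right hV (Real.exp_nonneg _)
    rw [mul_assoc, ← Real.exp_add] at h2
    have h3 : (2/3 : ℝ) * (x * Real.sqrt x) + -(2/3) * (x * Real.sqrt x) = 0 := by ring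
    rw [h3, Real.exp_zero, mul_one] at h2
    have hrw : x ^ ((3:ℝ)/2) = x * Real.sqrt x := by
      rw [show ((3:ℝ)/2) = 1 + 1/2 by norm_num, Real.rpow_add hx, Real.rpow_one,
        ← Real.sqrt_eq_rpow]
    rw [hrw, abs_of_nonneg hge]
    exact h2
  · obtain ⟨M1, hM1⟩ := (isCompact_Icc (a := (-1:ℝ)) (b := 0)).exists_bound_of_continuousOn
      hd.continuous.continuousOn
    refine ⟨max M1 (Real.sqrt (Ai (-1) * Ai (-1) - deriv Ai (-1) * deriv Ai (-1) / (-1))), ?_⟩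
    intro x hx
    rcases le_or_gt x (-1) with h1 | h1
    · have hF := AiryAux.F_mono hd hd' hode (mem_Iic.mpr h1) (mem_Iic.mpr le_rfl) h1
      simp only at hF
      have hdiv : deriv Ai x * deriv Ai x / x ≤ 0 :=
        div_nonpos_of_nonneg_of_nonpos (mul_self_nonneg _) (by linarith)
      have hsq : Ai x ^ 2 ≤ Ai (-1) * Ai (-1) - deriv Ai (-1) * deriv Ai (-1) / (-1) := by
        nlinarith
      exact le_trans (Real.abs_le_sqrt hsq) (le_max_right _ _)
    · have := hM1 x ⟨h1.le, hx⟩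
      rw [Real.norm_eq_abs] at this
      exact le_trans this (le_max_left _ _)
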